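/- arXiv:1309.6378 — 6 statements merged into one kernel-verified Lean document; each statement's English description precedes it below -/
import Mathlib

section
/- The elliptic inverse P' of P = (u,v) lies on the ray from the origin through P, and satisfies |OP| · |OP'| = |OQ|², where Q is the point where that ray meets the ellipse E. -/
/-- Elliptic inversion with respect to the ellipse x^2/a^2 + y^2/b^2 = 1. -/
noncomputable def einv (a b : ℝ) (p : ℝ × ℝ) : ℝ × ℝ :=
  (a ^ 2 * b ^ 2 * p.1 / (b ^ 2 * p.1 ^ 2 + a ^ 2 * p.2 ^ 2),
   a ^ 2 * b ^ 2 * p.2 / (b ^ 2 * p.1 ^ 2 + a ^ 2 * p.2 ^ 2))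

/-- Euclidean norm on ℝ × ℝ. -/
noncomputable def nrm (p : ℝ × ℝ) : ℝ := Real.sqrt (p.1 ^ 2 + p.2 ^ 2)

theorem elliptic_inversion_ray_and_radius (a b : ℝ) (ha : 0 < a) (hb : 0 < b)
    (p q : ℝ × ℝ) (hp : p ≠ 0)
    (hq_ray : ∃ s : ℝ, 0 < s ∧ q = s • p)
    (hq_ell : q.1 ^ 2 / a ^ 2 + q.2 ^ 2 / b ^ 2 = 1) :
    (∃ t : ℝ, 0 < t ∧ einv a b p = t • p) ∧
      nrm p * nrm (einv a b p) = nrm q ^ 2 := by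
  obtain ⟨s, hs, hq⟩ := hq_ray
  have hD : 0 < b ^ 2 * p.1 ^ 2 + a ^ 2 * p.2 ^ 2 := by
    have h : p.1 ≠ 0 ∨ p.2 ≠ 0 := by
      by_contra h
      push_neg at h
      exact hp (Prod.ext h.1 h.2)
    rcases h with h | h
    · have h1 : 0 < b ^ 2 * p.1 ^ 2 :=
        mul_pos (by positivity) (pow_two_pos_of_ne_zero h)
      nlinarith [mul_nonneg (sq_nonneg a) (sq_nonneg p.2)]
    · have h1 : 0 < a ^ 2 * p.2 ^ 2 :=
        mul_pos (by positivity) (pow_two_pos_of_ne_zero h)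
      nlinarith [mul_nonneg (sq_nonneg b) (sq_nonneg p.1)]
  set D := b ^ 2 * p.1 ^ 2 + a ^ 2 * p.2 ^ 2 with hDdef
  have ht : (0:ℝ) < a ^ 2 * b ^ 2 / D := by positivity
  have heinv : einv a b p = (a ^ 2 * b ^ 2 / D) • p := by
    simp only [einv, Prod.smul_mk, smul_eq_mul, Prod.mk.injEq, Prod.smul_def]
    constructor <;> ring
  constructor
  · exact ⟨a ^ 2 * b ^ 2 / D, ht, heinv⟩
  · have hs2 : s ^ 2 * D = a ^ 2 * b ^ 2 := by
      have := hq_ell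
      rw [hq] at this
      simp only [Prod.smul_def, smul_eq_mul] at this
      field_simp at this
      nlinarith [this]
    have hnp : nrm p ^ 2 = p.1 ^ 2 + p.2 ^ 2 := by
      rw [nrm, Real.sq_sqrt (by positivity)]
    have hsmul : ∀ (c : ℝ), 0 ≤ c → nrm (c • p) = c * nrm p := by
      intro c hc
      simp only [nrm, Prod.smul_def, smul_eq_mul, mul_pow]
      rw [← mul_add, Real.sqrt_mul (by positivity), Real.sqrt_sq hc]
    rw [heinv, hsmul _ ht.le, hq, hsmul _ hs.le, mul_pow, hnp]
    have : nrm p * (a ^ 2 * b ^ 2 / D * nrm p) = a ^ 2 * b ^ 2 / D * nrm p ^ 2 := by ring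
    rw [this, hnp]
    field_simp
    nlinarith [hs2, hnp]
end

section
/- Let P and T be distinct points, neither equal to O, with elliptic inverses P' and T' having inversion radii w = |OQ| and u = |OS| respectively (Q, S are the intersections of rays OP, OT with the ellipse). If P, T, O are not collinear, then |P'T'| = sqrt((w² − u²)(w²|OT|² − u²|OP|²) + w²u²|PT|²) / (|OP| · |OT|). -/
lemma nrm_sq (p : ℝ × ℝ) : nrm p ^ 2 = p.1 ^ 2 + p.2 ^ 2 :=
  Real.sq_sqrt (by positivity)

lemma nrm_nonneg (p : ℝ × ℝ) : 0 ≤ nrm p := Real.sqrt_nonneg _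

lemma nrm_pos (p : ℝ × ℝ) (h : p ≠ 0) : 0 < nrm p := by
  apply Real.sqrt_pos.mpr
  rcases eq_or_ne p.1 0 with h1 | h1
  · have h2 : p.2 ≠ 0 := by
      intro h2
      exact h (Prod.ext h1 h2)
    positivity
  · positivity

lemma nrm_smul (c : ℝ) (p : ℝ × ℝ) : nrm (c • p) = |c| * nrm p := by
  unfold nrm
  rw [Prod.smul_fst, Prod.smul_snd, smul_eq_mul, smul_eq_mul]
  rw [show (c * p.1) ^ 2 + (c * p.2) ^ 2 = c ^ 2 * (p.1 ^ 2 + p.2 ^ 2) by ring,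
    Real.sqrt_mul (by positivity), Real.sqrt_sq_eq_abs]

theorem elliptic_inverse_distance_noncollinear
    (O P T P' T' : ℝ × ℝ) (w u : ℝ) (hw : 0 < w) (hu : 0 < u)
    (hP : P ≠ O) (hT : T ≠ O) (hPT : P ≠ T)
    (hncol : ¬ Collinear ℝ ({O, P, T} : Set (ℝ × ℝ)))
    (hP' : ∃ t : ℝ, 0 < t ∧ P' - O = t • (P - O))
    (hT' : ∃ t : ℝ, 0 < t ∧ T' - O = t • (T - O))
    (hPw : nrm (P - O) * nrm (P' - O) = w ^ 2)
    (hTu : nrm (T - O) * nrm (T' - O) = u ^ 2) :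
    nrm (P' - T') =
      Real.sqrt ((w ^ 2 - u ^ 2) * (w ^ 2 * nrm (T - O) ^ 2 - u ^ 2 * nrm (P - O) ^ 2)
          + w ^ 2 * u ^ 2 * nrm (P - T) ^ 2) / (nrm (P - O) * nrm (T - O)) := by
  obtain ⟨α, hα, hPe⟩ := hP'
  obtain ⟨β, hβ, hTe⟩ := hT'
  have hnp : 0 < nrm (P - O) := nrm_pos _ (sub_ne_zero.mpr hP)
  have hnt : 0 < nrm (T - O) := nrm_pos _ (sub_ne_zero.mpr hT)
  have hw2 : w ^ 2 = α * nrm (P - O) ^ 2 := by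
    rw [← hPw, hPe, nrm_smul, abs_of_pos hα]; ring
  have hu2 : u ^ 2 = β * nrm (T - O) ^ 2 := by
    rw [← hTu, hTe, nrm_smul, abs_of_pos hβ]; ring
  have hdiff : P' - T' = α • (P - O) - β • (T - O) := by
    rw [← hPe, ← hTe]; abel
  rw [eq_div_iff (by positivity)]
  have hmul : nrm (P - O) * nrm (T - O) =
      Real.sqrt (((P - O).1 ^ 2 + (P - O).2 ^ 2) * ((T - O).1 ^ 2 + (T - O).2 ^ 2)) := by
    unfold nrm
    rw [Real.sqrt_mul (by positivity)]
  have hnpsq := nrm_sq (P - O)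
  have hntsq := nrm_sq (T - O)
  have hptsq := nrm_sq (P - T)
  have hPT1 : (P - T).1 = (P - O).1 - (T - O).1 := by simp
  have hPT2 : (P - T).2 = (P - O).2 - (T - O).2 := by simp
  rw [hdiff, hmul, hw2, hu2, hnpsq, hntsq, hptsq, hPT1, hPT2]
  unfold nrm
  rw [← Real.sqrt_mul (by positivity)]
  congr 1
  simp only [Prod.fst_sub, Prod.snd_sub, Prod.smul_fst, Prod.smul_snd, smul_eq_mul]
  ring
end

section
/- Let l₁: Mx + Ny + P = 0 and l₂: My − Nx + D = 0 (P, D ≠ 0) be two perpendicular lines not through the origin. Their images under elliptic inversion with respect to x²/a² + y²/b² = 1 are the ellipses x²/a² + y²/b² + (M/P)x + (N/P)y = 0 and x²/a² + y²/b² − (N/D)x + (M/D)y = 0, and the tangent lines to these ellipses at the origin, namely Mx + Ny = 0 and −Nx + My = 0, are perpendicular. -/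
/-! The inversion is the scaling `p ↦ (a²b² / Q p) • p` with `Q p = b²x² + a²y²`, and on its image
the quadratic part `x²/a² + y²/b²` equals `a²b² / Q p`. Hence the linear form `ux + vy + c` of `p`,
multiplied by `a²b² / (c Q p)`, is the conic `x²/a² + y²/b² + (u/c)x + (v/c)y` evaluated at the
image: lines avoiding the origin go to conics through it whose tangent there is `ux + vy = 0`. -/

lemma sq_mul_fst_add_sq_mul_snd_pos {a b : ℝ} (ha : a ≠ 0) (hb : b ≠ 0) {p : ℝ × ℝ}
    (hp : p ≠ 0) : 0 < b ^ 2 * p.1 ^ 2 + a ^ 2 * p.2 ^ 2 := by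
  have hp' : p.1 ≠ 0 ∨ p.2 ≠ 0 := by
    contrapose! hp
    exact Prod.ext hp.1 hp.2
  rcases hp' with h | h <;> positivity

lemma einv_fst_sq_div_add_snd_sq_div {a b : ℝ} (ha : a ≠ 0) (hb : b ≠ 0) {p : ℝ × ℝ}
    (hp : p ≠ 0) :
    (einv a b p).1 ^ 2 / a ^ 2 + (einv a b p).2 ^ 2 / b ^ 2
      = a ^ 2 * b ^ 2 / (b ^ 2 * p.1 ^ 2 + a ^ 2 * p.2 ^ 2) := by
  have hQ := (sq_mul_fst_add_sq_mul_snd_pos ha hb hp).ne'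
  simp only [einv]
  field_simp

lemma einv_mem_conic_of_mem_line {a b u v c : ℝ} (ha : a ≠ 0) (hb : b ≠ 0) (hc : c ≠ 0)
    {p : ℝ × ℝ} (hp : p ≠ 0) (hl : u * p.1 + v * p.2 + c = 0) :
    (einv a b p).1 ^ 2 / a ^ 2 + (einv a b p).2 ^ 2 / b ^ 2
      + (u / c) * (einv a b p).1 + (v / c) * (einv a b p).2 = 0 := by
  have hQ := (sq_mul_fst_add_sq_mul_snd_pos ha hb hp).ne'
  rw [einv_fst_sq_div_add_snd_sq_div ha hb hp]
  simp only [einv]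
  field_simp
  linear_combination (a ^ 2 * b ^ 2) * hl

theorem elliptic_inversion_perpendicular_lines_general (a b M N P D : ℝ) (ha : 0 < a) (hb : 0 < b)
    (hP : P ≠ 0) (hD : D ≠ 0) :
    (∀ p : ℝ × ℝ, p ≠ 0 → M * p.1 + N * p.2 + P = 0 →
      (einv a b p).1 ^ 2 / a ^ 2 + (einv a b p).2 ^ 2 / b ^ 2
        + (M / P) * (einv a b p).1 + (N / P) * (einv a b p).2 = 0) ∧
    (∀ p : ℝ × ℝ, p ≠ 0 → M * p.2 - N * p.1 + D = 0 →
      (einv a b p).1 ^ 2 / a ^ 2 + (einv a b p).2 ^ 2 / b ^ 2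
        - (N / D) * (einv a b p).1 + (M / D) * (einv a b p).2 = 0) ∧
    (N * M + (-M) * N = 0) := by
  refine ⟨fun p hp hl => einv_mem_conic_of_mem_line ha.ne' hb.ne' hP hp hl,
    fun p hp hl => ?_, by ring⟩
  have hl' : -N * p.1 + M * p.2 + D = 0 := by linear_combination hl
  linear_combination einv_mem_conic_of_mem_line ha.ne' hb.ne' hD hp hl'

theorem elliptic_inversion_perpendicular_lines (a b M N P D : ℝ) (ha : 0 < a) (hb : 0 < b)
    (hMN : (M, N) ≠ (0, 0)) (hP : P ≠ 0) (hD : D ≠ 0) :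
    (∀ p : ℝ × ℝ, p ≠ 0 → M * p.1 + N * p.2 + P = 0 →
      (einv a b p).1 ^ 2 / a ^ 2 + (einv a b p).2 ^ 2 / b ^ 2
        + (M / P) * (einv a b p).1 + (N / P) * (einv a b p).2 = 0) ∧
    (∀ p : ℝ × ℝ, p ≠ 0 → M * p.2 - N * p.1 + D = 0 →
      (einv a b p).1 ^ 2 / a ^ 2 + (einv a b p).2 ^ 2 / b ^ 2
        - (N / D) * (einv a b p).1 + (M / D) * (einv a b p).2 = 0) ∧
    (N * M + (-M) * N = 0) :=
  elliptic_inversion_perpendicular_lines_general a b M N P D ha hb hP hD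
end

section
/- Elliptic inversion with respect to E: x²/a² + y²/b² = 1 maps an ellipse homothetic to E and not passing through the origin to another ellipse homothetic to E not passing through the origin: if F ≠ 0 and (x,y) ≠ (0,0) satisfies x²/a² + y²/b² + Dx + Ey + F = 0, then (X,Y) = ψ(x,y) satisfies X²/a² + Y²/b² + (D/F)X + (E/F)Y + 1/F = 0. -/
theorem elliptic_inversion_homothetic_ellipse_not_through_origin
    (a b D E F : ℝ) (ha : 0 < a) (hb : 0 < b) (hF : F ≠ 0)
    (p : ℝ × ℝ) (hp : p ≠ 0)
    (hconic : p.1 ^ 2 / a ^ 2 + p.2 ^ 2 / b ^ 2 + D * p.1 + E * p.2 + F = 0) :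
    (einv a b p).1 ^ 2 / a ^ 2 + (einv a b p).2 ^ 2 / b ^ 2
      + (D / F) * (einv a b p).1 + (E / F) * (einv a b p).2 + 1 / F = 0 := by
  have h1 : p.1 ≠ 0 ∨ p.2 ≠ 0 := by
    by_contra hc
    push_neg at hc
    exact hp (Prod.ext hc.1 hc.2)
  have hq : 0 < b ^ 2 * p.1 ^ 2 + a ^ 2 * p.2 ^ 2 := by
    rcases h1 with h1 | h1 <;> positivity
  have hq' : b ^ 2 * p.1 ^ 2 + a ^ 2 * p.2 ^ 2 ≠ 0 := hq.ne'
  have ha' : a ≠ 0 := ha.ne'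
  have hb' : b ≠ 0 := hb.ne'
  have key : F * (a ^ 2 * b ^ 2) + D * (a ^ 2 * b ^ 2) * p.1 + E * (a ^ 2 * b ^ 2) * p.2
      + (b ^ 2 * p.1 ^ 2 + a ^ 2 * p.2 ^ 2) = 0 := by
    field_simp at hconic
    linarith
  have expand : (einv a b p).1 ^ 2 / a ^ 2 + (einv a b p).2 ^ 2 / b ^ 2
      + (D / F) * (einv a b p).1 + (E / F) * (einv a b p).2 + 1 / F
      = (F * (a ^ 2 * b ^ 2) + D * (a ^ 2 * b ^ 2) * p.1 + E * (a ^ 2 * b ^ 2) * p.2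
        + (b ^ 2 * p.1 ^ 2 + a ^ 2 * p.2 ^ 2)) / (F * (b ^ 2 * p.1 ^ 2 + a ^ 2 * p.2 ^ 2)) := by
    simp only [einv]
    field_simp
  rw [expand, key, zero_div]
end

section
/- Elliptic inversion with respect to E: x²/a² + y²/b² = 1 maps an ellipse homothetic to E passing through the origin (minus the origin itself) to a line not through the origin: if (x,y) ≠ (0,0) satisfies x²/a² + y²/b² + Dx + Ey = 0 with (D,E) ≠ (0,0), then (X,Y) = ψ(x,y) satisfies DX + EY + 1 = 0. -/
/-! With `Q p = b²x² + a²y²` we have `ψ p = (a²b² / Q p) • p`, so a linear form `D X + E Y`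
evaluated at `ψ p` is `a²b² (D x + E y) / Q p`. Clearing denominators in the conic equation
gives `Q p = -a²b² (D x + E y)`, hence the value `-1`. -/

section

variable {a b : ℝ} {p : ℝ × ℝ}

lemma einv_denom_pos (ha : a ≠ 0) (hb : b ≠ 0) (hp : p ≠ 0) :
    0 < b ^ 2 * p.1 ^ 2 + a ^ 2 * p.2 ^ 2 := by
  by_cases hx : p.1 = 0
  · have hy : p.2 ≠ 0 := fun hy => hp (Prod.ext hx hy)
    positivity
  · positivity

lemma linear_form_einv (D E : ℝ) :
    D * (einv a b p).1 + E * (einv a b p).2 =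
      a ^ 2 * b ^ 2 * (D * p.1 + E * p.2) / (b ^ 2 * p.1 ^ 2 + a ^ 2 * p.2 ^ 2) := by
  simp only [einv]
  ring

lemma einv_denom_eq_of_conic {D E : ℝ} (ha : a ≠ 0) (hb : b ≠ 0)
    (hconic : p.1 ^ 2 / a ^ 2 + p.2 ^ 2 / b ^ 2 + D * p.1 + E * p.2 = 0) :
    b ^ 2 * p.1 ^ 2 + a ^ 2 * p.2 ^ 2 = -(a ^ 2 * b ^ 2 * (D * p.1 + E * p.2)) := by
  field_simp at hconic
  linear_combination hconic

end

theorem elliptic_inversion_homothetic_ellipse_through_origin_general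
    (a b D E : ℝ) (ha : 0 < a) (hb : 0 < b)
    (p : ℝ × ℝ) (hp : p ≠ 0)
    (hconic : p.1 ^ 2 / a ^ 2 + p.2 ^ 2 / b ^ 2 + D * p.1 + E * p.2 = 0) :
    D * (einv a b p).1 + E * (einv a b p).2 + 1 = 0 := by
  have hQ := einv_denom_pos ha.ne' hb.ne' hp
  rw [linear_form_einv, div_add_one hQ.ne', einv_denom_eq_of_conic ha.ne' hb.ne' hconic,
    add_neg_cancel, zero_div]

theorem elliptic_inversion_homothetic_ellipse_through_origin
    (a b D E : ℝ) (ha : 0 < a) (hb : 0 < b) (hDE : (D, E) ≠ (0, 0))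
    (p : ℝ × ℝ) (hp : p ≠ 0)
    (hconic : p.1 ^ 2 / a ^ 2 + p.2 ^ 2 / b ^ 2 + D * p.1 + E * p.2 = 0) :
    D * (einv a b p).1 + E * (einv a b p).2 + 1 = 0 :=
  elliptic_inversion_homothetic_ellipse_through_origin_general a b D E ha hb p hp hconic
end

section
/- Elliptic inversion does not preserve the cross ratio: there exist four distinct collinear points A, B, C, D (none equal to the center O) whose elliptic inverses A', B', C', D' with respect to some ellipse E satisfy {A'B', C'D'} ≠ {AB, CD}, where {XY, ZW} = (|XZ|·|YW|)/(|XW|·|YZ|). -/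
theorem elliptic_inversion_not_cross_ratio_preserving :
    ∃ (a b : ℝ) (_ : 0 < a) (_ : 0 < b) (A B C D : ℝ × ℝ),
      A ≠ 0 ∧ B ≠ 0 ∧ C ≠ 0 ∧ D ≠ 0 ∧
      A ≠ B ∧ A ≠ C ∧ A ≠ D ∧ B ≠ C ∧ B ≠ D ∧ C ≠ D ∧
      Collinear ℝ ({A, B, C, D} : Set (ℝ × ℝ)) ∧
      (nrm (einv a b A - einv a b C) * nrm (einv a b B - einv a b D)) /
          (nrm (einv a b A - einv a b D) * nrm (einv a b B - einv a b C)) ≠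
        (nrm (A - C) * nrm (B - D)) / (nrm (A - D) * nrm (B - C)) := by
  refine ⟨1, 2, one_pos, two_pos, (1,1), (1,2), (1,3), (1,4), ?_, ?_, ?_, ?_,
    ?_, ?_, ?_, ?_, ?_, ?_, ?_, ?_⟩
  · simp [Prod.ext_iff]
  · simp [Prod.ext_iff]
  · simp [Prod.ext_iff]
  · simp [Prod.ext_iff]
  · simp [Prod.ext_iff]
  · simp [Prod.ext_iff]
  · simp [Prod.ext_iff]
  · simp [Prod.ext_iff]
  · simp [Prod.ext_iff]
  · simp [Prod.ext_iff]
  · rw [collinear_iff_exists_forall_eq_smul_vadd]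
    refine ⟨(1,0), (0,1), ?_⟩
    rintro x hx
    simp only [Set.mem_insert_iff, Set.mem_singleton_iff] at hx
    rcases hx with h|h|h|h <;> subst h
    · exact ⟨1, by norm_num [Prod.ext_iff]⟩
    · exact ⟨2, by norm_num [Prod.ext_iff]⟩
    · exact ⟨3, by norm_num [Prod.ext_iff]⟩
    · exact ⟨4, by norm_num [Prod.ext_iff]⟩
  · simp only [einv, nrm]
    norm_num
    intro h
    have h2 := congrArg (· ^ 2) h
    simp only [div_pow, mul_pow, Real.sq_sqrt (by norm_num : (1088:ℝ) ≥ 0),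
      Real.sq_sqrt (by norm_num : (4225:ℝ) ≥ 0), Real.sq_sqrt (by norm_num : (13:ℝ) ≥ 0),
      Real.sq_sqrt (by norm_num : (100:ℝ) ≥ 0), Real.sq_sqrt (by norm_num : (9:ℝ) ≥ 0),
      Real.sq_sqrt (by norm_num : (25:ℝ) ≥ 0), Real.sq_sqrt (by norm_num : (29:ℝ) ≥ 0),
      Real.sq_sqrt (by norm_num : (676:ℝ) ≥ 0)] at h2
    norm_num at h2
end
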